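/- Let A, Â = A + E ∈ ℝ^{n×n} be symmetric, and suppose A has a simple largest eigenvalue λ with unit eigenvector q₁, eigengap g = min over the other eigenvalues ϱ of |λ − ϱ| > 0. Write the eigendecomposition Q = [q₁ | Q₂] orthogonal with QᵀAQ = diag(λ, Λ₂) and QᵀEQ = [[ε, eᵀ],[e, E₂₂]]. If ‖E‖_F ≤ g/5, then there exists p ∈ ℝ^{n−1} with ‖p‖₂ ≤ (4/g)‖e‖₂ such that q̂₁ = (q₁ + Q₂ p)/√(1 + pᵀp) is a unit eigenvector of Â for its largest eigenvalue, and ‖q₁ q₁ᵀ − q̂₁ q̂₁ᵀ‖₂ ≤ (4/g)‖e‖₂. -/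

import Mathlib

open scoped BigOperators

/-- Euclidean (ℓ₂) norm of a finitely-indexed real vector. -/
noncomputable def enorm {ι : Type*} [Fintype ι] (v : ι → ℝ) : ℝ :=
  Real.sqrt (∑ i, v i ^ 2)

/-- Euclidean inner product of two real vectors. -/
def ip {ι : Type*} [Fintype ι] (u v : ι → ℝ) : ℝ := ∑ i, u i * v i

/-- Spectral (ℓ₂ operator) norm of a real matrix: supremum of ‖A x‖ over unit vectors x. -/
noncomputable def specNorm {m n : Type*} [Fintype m] [Fintype n] (A : Matrix m n ℝ) : ℝ :=
  sSup ((fun x : n → ℝ => _root_.enorm (A.mulVec x)) '' {x | _root_.enorm x = 1})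

/-- Frobenius norm of a real matrix. -/
noncomputable def frobNorm {m n : Type*} [Fintype m] [Fintype n] (A : Matrix m n ℝ) : ℝ :=
  Real.sqrt (∑ i, ∑ j, A i j ^ 2)

/-- Smallest singular value of a real matrix: infimum of ‖A x‖ over unit vectors x. -/
noncomputable def smin {m n : Type*} [Fintype m] [Fintype n] (A : Matrix m n ℝ) : ℝ :=
  sInf ((fun x : n → ℝ => _root_.enorm (A.mulVec x)) '' {x | _root_.enorm x = 1})

/-- Rank-one outer product u vᵀ. -/
def outer {ι : Type*} (u v : ι → ℝ) : Matrix ι ι ℝ := Matrix.of fun i j => u i * v j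

/-- Column submatrix given by a finite index set. -/
def colSub {m n : Type*} (A : Matrix m n ℝ) (s : Finset n) : Matrix m s ℝ :=
  Matrix.of fun i j => A i j

open Matrix

/-! In the eigenbasis of `A` the perturbed matrix is `B = Qᵀ (A + E) Q = diag d + F` with
`F = Qᵀ E Q` and `‖F‖_F = ‖E‖_F ≤ g/5`. Take a unit eigenvector `u` of `A + E` for its largest
eigenvalue `μ`, signed so that `v = Qᵀ u` has `v₀ ≥ 0`. Then `B v = μ v`, and `μ` dominates the
Rayleigh quotient `B₀₀ = λ + F₀₀`, so `μ ≥ λ - g/5` and `μ - dᵢ ≥ 4g/5` for `i ≥ 1`. The last `m`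
rows of `B v = μ v` read `(μ - dᵢ) vᵢ = v₀ eᵢ + (F₂₂ v_tail)ᵢ`, whence
`(4g/5) ‖v_tail‖ ≤ v₀ ‖e‖ + (g/5) ‖v_tail‖`. Thus `v₀ > 0`, `u = Q v = q̂₁` for `p = v_tail / v₀`,
and both `‖p‖` and `‖q₁q₁ᵀ - q̂₁q̂₁ᵀ‖₂ ≤ √(1 - v₀²) = ‖v_tail‖` (a 3 × 3 Gram determinant bound)
are at most `(5/(3g)) ‖e‖`. -/

namespace EuclideanNorm

variable {ι : Type*} [Fintype ι]

theorem ip_eq_dotProduct (u v : ι → ℝ) : ip u v = u ⬝ᵥ v := rfl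

theorem dotProduct_self_nonneg (v : ι → ℝ) : 0 ≤ v ⬝ᵥ v :=
  Finset.sum_nonneg fun i _ => mul_self_nonneg (v i)

theorem enorm_eq_norm_toLp (v : ι → ℝ) :
    _root_.enorm v = ‖(WithLp.toLp 2 v : EuclideanSpace ℝ ι)‖ := by
  simp [_root_.enorm, EuclideanSpace.norm_eq]

theorem enorm_eq_sqrt_dotProduct (v : ι → ℝ) : _root_.enorm v = √(v ⬝ᵥ v) := by
  simp [_root_.enorm, dotProduct, sq]

theorem enorm_nonneg (v : ι → ℝ) : 0 ≤ _root_.enorm v := Real.sqrt_nonneg _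

theorem enorm_eq_one_iff {v : ι → ℝ} : _root_.enorm v = 1 ↔ v ⬝ᵥ v = 1 := by
  rw [enorm_eq_sqrt_dotProduct, Real.sqrt_eq_one]

theorem enorm_add_le (u v : ι → ℝ) :
    _root_.enorm (u + v) ≤ _root_.enorm u + _root_.enorm v := by
  simpa only [enorm_eq_norm_toLp, WithLp.toLp_add] using norm_add_le _ _

theorem enorm_smul (c : ℝ) (v : ι → ℝ) : _root_.enorm (c • v) = |c| * _root_.enorm v := by
  simp only [enorm_eq_norm_toLp, WithLp.toLp_smul, norm_smul, Real.norm_eq_abs]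

theorem enorm_le_enorm_of_abs_le {u v : ι → ℝ} (h : ∀ i, |u i| ≤ |v i|) :
    _root_.enorm u ≤ _root_.enorm v :=
  Real.sqrt_le_sqrt <| Finset.sum_le_sum fun i _ => sq_le_sq.mpr (h i)

end EuclideanNorm

section Frobenius

variable {ι κ : Type*} [Fintype ι] [Fintype κ]

theorem frobNorm_eq_sqrt_trace (A : Matrix ι κ ℝ) : frobNorm A = √(trace (Aᵀ * A)) := by
  rw [frobNorm, trace, Finset.sum_comm]
  simp [mul_apply, sq]

theorem frobNorm_transpose_mul_mul [DecidableEq ι] {Q : Matrix ι ι ℝ} (hQ : Qᵀ * Q = 1)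
    (E : Matrix ι ι ℝ) : frobNorm (Qᵀ * E * Q) = frobNorm E := by
  have hQQ : Q * Qᵀ = 1 := mul_eq_one_comm.mp hQ
  rw [frobNorm_eq_sqrt_trace, frobNorm_eq_sqrt_trace]
  simp only [transpose_mul, transpose_transpose, Matrix.mul_assoc]
  rw [← Matrix.mul_assoc Q, hQQ, Matrix.one_mul, trace_mul_comm]
  simp only [Matrix.mul_assoc, hQQ, Matrix.mul_one]

theorem abs_apply_le_frobNorm (A : Matrix ι κ ℝ) (i : ι) (j : κ) : |A i j| ≤ frobNorm A := by
  rw [← Real.sqrt_sq_eq_abs]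
  refine Real.sqrt_le_sqrt <|
    (Finset.single_le_sum (fun j _ => sq_nonneg (A i j)) (Finset.mem_univ j)).trans ?_
  exact Finset.single_le_sum (f := fun i => ∑ j, A i j ^ 2) (fun i _ => by positivity)
    (Finset.mem_univ i)

theorem sum_comp_le_sum_of_injective {α β : Type*} [Fintype α] [Fintype β] {φ : α → β}
    (hφ : φ.Injective) {h : β → ℝ} (h0 : ∀ b, 0 ≤ h b) : ∑ a, h (φ a) ≤ ∑ b, h b := by
  simpa only [Finset.sum_map, Function.Embedding.coeFn_mk] using
    Finset.sum_le_univ_sum_of_nonneg (s := Finset.univ.map ⟨φ, hφ⟩) h0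

theorem frobNorm_submatrix_le {ι' κ' : Type*} [Fintype ι'] [Fintype κ'] (A : Matrix ι κ ℝ)
    {f : ι' → ι} {g : κ' → κ} (hf : f.Injective) (hg : g.Injective) :
    frobNorm (A.submatrix f g) ≤ frobNorm A := by
  refine Real.sqrt_le_sqrt <| (Finset.sum_le_sum fun i _ =>
    sum_comp_le_sum_of_injective hg fun _ => sq_nonneg _).trans ?_
  exact sum_comp_le_sum_of_injective hf fun _ => Finset.sum_nonneg fun _ _ => sq_nonneg _

theorem enorm_mulVec_le (M : Matrix ι κ ℝ) (x : κ → ℝ) :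
    _root_.enorm (M *ᵥ x) ≤ frobNorm M * _root_.enorm x := by
  rw [frobNorm, _root_.enorm, _root_.enorm, ← Real.sqrt_mul (by positivity), Finset.sum_mul]
  exact Real.sqrt_le_sqrt <| Finset.sum_le_sum fun i _ => Finset.sum_mul_sq_le_sq_mul_sq _ _ _

end Frobenius

section Rayleigh

variable {n : Type*} [Fintype n]

theorem dotProduct_mulVec_mulVec_of_transpose_mul_self [DecidableEq n] {Q : Matrix n n ℝ}
    (hQ : Qᵀ * Q = 1) (x y : n → ℝ) : (Q *ᵥ x) ⬝ᵥ (Q *ᵥ y) = x ⬝ᵥ y := by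
  rw [dotProduct_mulVec, vecMul_mulVec, hQ, vecMul_one]

theorem transpose_mul_mul_mulVec_transpose_mulVec [DecidableEq n] {Q : Matrix n n ℝ}
    (hQ : Q * Qᵀ = 1) (M : Matrix n n ℝ) (x : n → ℝ) :
    (Qᵀ * M * Q) *ᵥ (Qᵀ *ᵥ x) = Qᵀ *ᵥ (M *ᵥ x) := by
  rw [mulVec_mulVec, Matrix.mul_assoc, hQ, Matrix.mul_one, mulVec_mulVec]

theorem forall_dotProduct_transpose_mul_mul_mulVec_le [DecidableEq n] {Q M : Matrix n n ℝ}
    (hQ : Qᵀ * Q = 1) {μ : ℝ} (hM : ∀ x, x ⬝ᵥ M *ᵥ x ≤ μ * (x ⬝ᵥ x)) (y : n → ℝ) :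
    y ⬝ᵥ (Qᵀ * M * Q) *ᵥ y ≤ μ * (y ⬝ᵥ y) := by
  rw [← mulVec_mulVec, ← mulVec_mulVec, dotProduct_mulVec, vecMul_transpose,
    ← dotProduct_mulVec_mulVec_of_transpose_mul_self hQ y y]
  exact hM _

theorem dotProduct_mul_diagonal_mul_transpose_mulVec_le [DecidableEq n] {U : Matrix n n ℝ}
    (hU : U * Uᵀ = 1) {d : n → ℝ} {μ : ℝ} (hd : ∀ k, d k ≤ μ) (x : n → ℝ) :
    x ⬝ᵥ (U * diagonal d * Uᵀ) *ᵥ x ≤ μ * (x ⬝ᵥ x) := by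
  refine forall_dotProduct_transpose_mul_mul_mulVec_le (Q := Uᵀ) (by rwa [transpose_transpose])
    (fun y => ?_) x
  calc y ⬝ᵥ diagonal d *ᵥ y = ∑ k, d k * y k ^ 2 := by
        simp [dotProduct, mulVec_diagonal, sq, mul_left_comm]
    _ ≤ ∑ k, μ * y k ^ 2 := by gcongr with k; exact hd k
    _ = μ * (y ⬝ᵥ y) := by simp [dotProduct, sq, Finset.mul_sum]

theorem Matrix.IsHermitian.dotProduct_mulVec_le [DecidableEq n] {B : Matrix n n ℝ}
    (hB : B.IsHermitian) {μ : ℝ} (hμ : ∀ k, hB.eigenvalues k ≤ μ) (x : n → ℝ) :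
    x ⬝ᵥ B *ᵥ x ≤ μ * (x ⬝ᵥ x) := by
  set U : Matrix n n ℝ := (hB.eigenvectorUnitary : Matrix n n ℝ)
  have hU : U * Uᵀ = 1 := by
    simpa [U, star_eq_conjTranspose] using Unitary.coe_mul_star_self hB.eigenvectorUnitary
  have hB' : B = U * diagonal hB.eigenvalues * Uᵀ := by
    simpa [U, Unitary.conjStarAlgAut_apply, star_eq_conjTranspose] using hB.spectral_theorem
  have := dotProduct_mul_diagonal_mul_transpose_mulVec_le hU hμ x
  rwa [← hB'] at this

theorem Matrix.IsHermitian.exists_eigenvector_forall_dotProduct_mulVec_le [DecidableEq n]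
    [Nonempty n] {B : Matrix n n ℝ} (hB : B.IsHermitian) :
    ∃ (μ : ℝ) (v : n → ℝ), v ⬝ᵥ v = 1 ∧ B *ᵥ v = μ • v ∧ ∀ x, x ⬝ᵥ B *ᵥ x ≤ μ * (x ⬝ᵥ x) := by
  obtain ⟨k, hk⟩ := Finite.exists_max hB.eigenvalues
  refine ⟨hB.eigenvalues k, hB.eigenvectorBasis k, ?_, hB.mulVec_eigenvectorBasis k,
    hB.dotProduct_mulVec_le hk⟩
  rw [← EuclideanNorm.enorm_eq_one_iff, EuclideanNorm.enorm_eq_norm_toLp, WithLp.toLp_ofLp]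
  exact hB.eigenvectorBasis.orthonormal.1 k

variable {B : Matrix n n ℝ} {μ : ℝ}

theorem le_of_mulVec_eq_smul_of_forall_dotProduct_mulVec_le
    (hμ : ∀ x, x ⬝ᵥ B *ᵥ x ≤ μ * (x ⬝ᵥ x)) {ν : ℝ} {x : n → ℝ} (hx : x ≠ 0)
    (hBx : B *ᵥ x = ν • x) : ν ≤ μ := by
  have hpos : 0 < x ⬝ᵥ x :=
    (EuclideanNorm.dotProduct_self_nonneg x).lt_of_ne' (dotProduct_self_eq_zero.not.mpr hx)
  have := hμ x
  rw [hBx, dotProduct_smul, smul_eq_mul] at this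
  exact le_of_mul_le_mul_right this hpos

theorem apply_self_le_of_forall_dotProduct_mulVec_le (hμ : ∀ x, x ⬝ᵥ B *ᵥ x ≤ μ * (x ⬝ᵥ x))
    (i : n) : B i i ≤ μ := by
  classical
  simpa using hμ (Pi.single i 1)

end Rayleigh

section Projections

open scoped RealInnerProductSpace

theorem inner_sq_add_inner_sq_sub_le {E : Type*} [NormedAddCommGroup E] [InnerProductSpace ℝ E]
    {x u q : E} (hx : ‖x‖ = 1) (hu : ‖u‖ = 1) (hq : ‖q‖ = 1) :
    ⟪u, x⟫ ^ 2 + ⟪q, x⟫ ^ 2 - 2 * ⟪u, x⟫ * ⟪q, x⟫ * ⟪u, q⟫ ≤ 1 - ⟪u, q⟫ ^ 2 := by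
  have := (posSemidef_gram ℝ ![x, u, q]).det_nonneg
  simp [det_fin_three, gram_apply, hx, hu, hq, real_inner_comm] at this
  rw [real_inner_comm x u, real_inner_comm x q]
  linarith

variable {ι : Type*} [Fintype ι]

theorem outer_mulVec (u v x : ι → ℝ) : outer u v *ᵥ x = (v ⬝ᵥ x) • u := by
  ext i
  simp [outer, mulVec, dotProduct, Finset.mul_sum, mul_comm, mul_left_comm]

theorem specNorm_outer_sub_outer_le {u q : ι → ℝ} (hu : u ⬝ᵥ u = 1) (hq : q ⬝ᵥ q = 1) :
    specNorm (outer u u - outer q q) ≤ √(1 - (u ⬝ᵥ q) ^ 2) := by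
  refine Real.sSup_le ?_ (Real.sqrt_nonneg _)
  rintro _ ⟨x, hx, rfl⟩
  have hunit : ∀ {w : ι → ℝ}, w ⬝ᵥ w = 1 → ‖(WithLp.toLp 2 w : EuclideanSpace ℝ ι)‖ = 1 :=
    fun hw => by rw [← EuclideanNorm.enorm_eq_norm_toLp, EuclideanNorm.enorm_eq_one_iff, hw]
  have hgram := inner_sq_add_inner_sq_sub_le
    (hunit (EuclideanNorm.enorm_eq_one_iff.mp hx)) (hunit hu) (hunit hq)
  simp only [EuclideanSpace.inner_toLp_toLp, star_trivial, dotProduct_comm x,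
    dotProduct_comm q u] at hgram
  dsimp only
  rw [sub_mulVec, outer_mulVec, outer_mulVec, EuclideanNorm.enorm_eq_sqrt_dotProduct]
  refine Real.sqrt_le_sqrt (le_of_eq_of_le ?_ hgram)
  simp only [dotProduct_sub, sub_dotProduct, dotProduct_smul, smul_dotProduct, smul_eq_mul, hu,
    hq, dotProduct_comm u q]
  ring

end Projections

section EigenbasisFrame

variable {m : ℕ}

theorem dotProduct_self_eq_head_sq_add (v : Fin (m + 1) → ℝ) :
    v ⬝ᵥ v = v 0 ^ 2 + Fin.tail v ⬝ᵥ Fin.tail v := by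
  simp [dotProduct, Fin.sum_univ_succ, sq, Fin.tail]

theorem tail_mulVec_diagonal_add (d : Fin (m + 1) → ℝ)
    (F : Matrix (Fin (m + 1)) (Fin (m + 1)) ℝ) (v : Fin (m + 1) → ℝ) :
    Fin.tail ((diagonal d + F) *ᵥ v) = (fun i : Fin m => d i.succ * v i.succ) +
      (v 0 • fun i : Fin m => F i.succ 0) + F.submatrix Fin.succ Fin.succ *ᵥ Fin.tail v := by
  ext i
  simp only [Fin.tail, add_mulVec, Pi.add_apply, mulVec_diagonal, Pi.smul_apply, smul_eq_mul]
  simp only [mulVec, dotProduct, Fin.sum_univ_succ, submatrix_apply, Fin.tail]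
  ring

theorem mul_enorm_tail_le_of_mulVec_eq_smul {d : Fin (m + 1) → ℝ}
    {F : Matrix (Fin (m + 1)) (Fin (m + 1)) ℝ} {μ δ : ℝ} {v : Fin (m + 1) → ℝ}
    (hv : (diagonal d + F) *ᵥ v = μ • v) (hδ : 0 ≤ δ) (hgap : ∀ i : Fin m, δ ≤ μ - d i.succ) :
    δ * _root_.enorm (Fin.tail v) ≤ |v 0| * _root_.enorm (fun i : Fin m => F i.succ 0) +
      frobNorm (F.submatrix Fin.succ Fin.succ) * _root_.enorm (Fin.tail v) := by
  have hrow : (fun i : Fin m => (μ - d i.succ) * v i.succ) =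
      (v 0 • fun i : Fin m => F i.succ 0) + F.submatrix Fin.succ Fin.succ *ᵥ Fin.tail v := by
    ext i
    have := congrFun (tail_mulVec_diagonal_add d F v) i
    simp only [hv, Fin.tail, Pi.smul_apply, Pi.add_apply, smul_eq_mul] at this ⊢
    linarith
  calc δ * _root_.enorm (Fin.tail v) = _root_.enorm (δ • Fin.tail v) := by
        rw [EuclideanNorm.enorm_smul, abs_of_nonneg hδ]
    _ ≤ _root_.enorm (fun i : Fin m => (μ - d i.succ) * v i.succ) :=
        EuclideanNorm.enorm_le_enorm_of_abs_le fun i => by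
          rw [Pi.smul_apply, smul_eq_mul, abs_mul, abs_mul, abs_of_nonneg hδ]
          exact mul_le_mul_of_nonneg_right ((hgap i).trans (le_abs_self _)) (abs_nonneg _)
    _ ≤ _ := by
        rw [hrow]
        exact (EuclideanNorm.enorm_add_le _ _).trans
          (add_le_add (EuclideanNorm.enorm_smul _ _).le (enorm_mulVec_le _ _))

theorem head_pos_and_enorm_tail_le {d : Fin (m + 1) → ℝ}
    {F : Matrix (Fin (m + 1)) (Fin (m + 1)) ℝ} {μ g : ℝ} {v : Fin (m + 1) → ℝ}
    (hv : (diagonal d + F) *ᵥ v = μ • v) (hv1 : v ⬝ᵥ v = 1) (hv0 : 0 ≤ v 0) (hg : 0 < g)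
    (hgap : ∀ i : Fin m, d i.succ ≤ d 0 - g) (hF : frobNorm F ≤ g / 5)
    (hμ : d 0 + F 0 0 ≤ μ) :
    0 < v 0 ∧
      _root_.enorm (Fin.tail v) ≤ 4 / g * _root_.enorm (fun i : Fin m => F i.succ 0) * v 0 := by
  have hF00 := (abs_le.mp ((abs_apply_le_frobNorm F 0 0).trans hF)).1
  have hF22 := (frobNorm_submatrix_le F (Fin.succ_injective _) (Fin.succ_injective _)).trans hF
  have key := mul_enorm_tail_le_of_mulVec_eq_smul hv (δ := 4 * g / 5) (by positivity)
    fun i => by linarith [hgap i]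
  rw [abs_of_nonneg hv0] at key
  have hbound : 3 * g * _root_.enorm (Fin.tail v) ≤
      5 * v 0 * _root_.enorm (fun i : Fin m => F i.succ 0) := by
    nlinarith [mul_le_mul_of_nonneg_right hF22 (EuclideanNorm.enorm_nonneg (Fin.tail v))]
  constructor
  · refine hv0.lt_of_ne' fun h0 => ?_
    rw [h0, mul_zero, zero_mul] at hbound
    have htail : Fin.tail v ⬝ᵥ Fin.tail v ≤ 0 := by
      rw [← Real.sqrt_eq_zero', ← EuclideanNorm.enorm_eq_sqrt_dotProduct]
      nlinarith [EuclideanNorm.enorm_nonneg (Fin.tail v)]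
    rw [dotProduct_self_eq_head_sq_add, h0] at hv1
    linarith
  · rw [div_mul_eq_mul_div, div_mul_eq_mul_div, le_div_iff₀ hg]
    nlinarith [EuclideanNorm.enorm_nonneg (fun i : Fin m => F i.succ 0)]

theorem inv_sqrt_one_add_smul_cons_eq {v : Fin (m + 1) → ℝ} (hv1 : v ⬝ᵥ v = 1)
    (hv0 : 0 < v 0) :
    (√(1 + ((v 0)⁻¹ • Fin.tail v) ⬝ᵥ ((v 0)⁻¹ • Fin.tail v)))⁻¹ •
      (Fin.cons 1 ((v 0)⁻¹ • Fin.tail v) : Fin (m + 1) → ℝ) = v := by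
  rw [dotProduct_self_eq_head_sq_add] at hv1
  have hsq : 1 + ((v 0)⁻¹ • Fin.tail v) ⬝ᵥ ((v 0)⁻¹ • Fin.tail v) = (v 0)⁻¹ ^ 2 := by
    rw [smul_dotProduct, dotProduct_smul, eq_sub_of_add_eq' hv1, smul_eq_mul, smul_eq_mul]
    field_simp
    ring
  rw [hsq, Real.sqrt_sq (inv_nonneg.mpr hv0.le), inv_inv]
  ext i
  refine Fin.cases ?_ (fun j => ?_) i
  · simp
  · simp [Fin.tail, hv0.ne']

theorem inv_sqrt_smul_col_add_mulVec_eq_mulVec {ι : Type*} (Q : Matrix ι (Fin (m + 1)) ℝ)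
    {v : Fin (m + 1) → ℝ} (hv1 : v ⬝ᵥ v = 1) (hv0 : 0 < v 0) :
    (√(1 + ((v 0)⁻¹ • Fin.tail v) ⬝ᵥ ((v 0)⁻¹ • Fin.tail v)))⁻¹ •
      ((fun i => Q i 0) + (of fun i j => Q i j.succ) *ᵥ ((v 0)⁻¹ • Fin.tail v)) = Q *ᵥ v := by
  conv_rhs => rw [← inv_sqrt_one_add_smul_cons_eq hv1 hv0, mulVec_smul]
  rw [← one_smul ℝ (fun i => Q i 0)]
  exact congrArg _ (mulVec_cons Q 1 _).symm

theorem specNorm_outer_col_sub_outer_le {Q : Matrix (Fin (m + 1)) (Fin (m + 1)) ℝ}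
    (hQ : Qᵀ * Q = 1) {u : Fin (m + 1) → ℝ} (hu : u ⬝ᵥ u = 1) :
    specNorm (outer (fun i => Q i 0) (fun i => Q i 0) - outer u u) ≤
      _root_.enorm (Fin.tail (Qᵀ *ᵥ u)) := by
  have hq : (fun i => Q i 0) ⬝ᵥ (fun i => Q i 0) = 1 := by
    simpa [mul_apply, dotProduct] using congrFun (congrFun hQ 0) 0
  have hv1 : (Qᵀ *ᵥ u) ⬝ᵥ (Qᵀ *ᵥ u) = 1 := by
    rwa [dotProduct_mulVec_mulVec_of_transpose_mul_self (by simpa using mul_eq_one_comm.mp hQ)]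
  refine (specNorm_outer_sub_outer_le hq hu).trans_eq ?_
  rw [EuclideanNorm.enorm_eq_sqrt_dotProduct, ← hv1, dotProduct_self_eq_head_sq_add (Qᵀ *ᵥ u)]
  congr 1
  simp [mulVec, dotProduct]

end EigenbasisFrame

theorem le_sub_inf'_abs_sub {ι : Type*} [Fintype ι] [Nonempty ι] {f : ι → ℝ} {c : ℝ}
    (hf : ∀ i, f i < c) (i : ι) :
    f i ≤ c - Finset.univ.inf' Finset.univ_nonempty (fun j => |c - f j|) := by
  have := Finset.inf'_le (fun j => |c - f j|) (Finset.mem_univ i)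
  rw [abs_of_pos (sub_pos.mpr (hf i))] at this
  linarith

/-- Eigenvector perturbation (Golub–Van Loan): A, Â = A + E symmetric,
Q = [q₁ | Q₂] orthogonal with QᵀAQ = diag(λ, Λ₂), λ = d 0 the simple largest
eigenvalue with eigengap g = minᵢ |λ − dᵢ| > 0, e the off-diagonal block of QᵀEQ.
If ‖E‖_F ≤ g/5 then there is p with ‖p‖ ≤ (4/g)‖e‖ such that
q̂₁ = (q₁ + Q₂p)/√(1 + pᵀp) is a unit eigenvector of Â for its largest eigenvalue
and ‖q₁q₁ᵀ − q̂₁q̂₁ᵀ‖₂ ≤ (4/g)‖e‖. -/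
theorem stmt_18 {m : ℕ} [NeZero m]
    (A E : Matrix (Fin (m + 1)) (Fin (m + 1)) ℝ) (hA : A.IsSymm) (hE : E.IsSymm)
    (Q : Matrix (Fin (m + 1)) (Fin (m + 1)) ℝ) (hQ : Qᵀ * Q = 1)
    (d : Fin (m + 1) → ℝ) (hdiag : Qᵀ * A * Q = Matrix.diagonal d)
    (lam : ℝ) (hlam : d 0 = lam)
    (hsimple : ∀ i : Fin m, d i.succ < lam)
    (g : ℝ)
    (hg : g = Finset.univ.inf' Finset.univ_nonempty (fun i : Fin m => |lam - d i.succ|))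
    (hgpos : 0 < g)
    (e : Fin m → ℝ) (he : e = fun i => (Qᵀ * E * Q) i.succ 0)
    (hEF : frobNorm E ≤ g / 5) :
    ∃ p : Fin m → ℝ, _root_.enorm p ≤ (4 / g) * _root_.enorm e ∧
      ∀ q1 : Fin (m + 1) → ℝ, q1 = (fun i => Q i 0) →
      ∀ Q2 : Matrix (Fin (m + 1)) (Fin m) ℝ, Q2 = Matrix.of (fun i j => Q i j.succ) →
      ∀ qhat1 : Fin (m + 1) → ℝ,
        qhat1 = (Real.sqrt (1 + ip p p))⁻¹ • (q1 + Q2.mulVec p) →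
        _root_.enorm qhat1 = 1 ∧
        (∃ μ : ℝ, (A + E).mulVec qhat1 = μ • qhat1 ∧
          ∀ (ν : ℝ) (x : Fin (m + 1) → ℝ), x ≠ 0 → (A + E).mulVec x = ν • x → ν ≤ μ) ∧
        specNorm (outer q1 q1 - outer qhat1 qhat1) ≤ (4 / g) * _root_.enorm e := by
  have hQQ : Q * Qᵀ = 1 := mul_eq_one_comm.mp hQ
  obtain ⟨μ, u, hu, hAEu, hmax⟩ :=
    (isHermitian_iff_isSymm.mpr (hA.add hE)).exists_eigenvector_forall_dotProduct_mulVec_le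
  wlog hu0 : 0 ≤ (Qᵀ *ᵥ u) 0 generalizing u
  · exact this (-u) (by rwa [neg_dotProduct_neg]) (by rw [mulVec_neg, hAEu, smul_neg])
      (by rw [mulVec_neg, Pi.neg_apply]; linarith)
  set v := Qᵀ *ᵥ u with hv
  have hB : Qᵀ * (A + E) * Q = diagonal d + Qᵀ * E * Q := by
    rw [← hdiag, Matrix.mul_add, Matrix.add_mul]
  have hv1 : v ⬝ᵥ v = 1 := by
    rwa [hv, dotProduct_mulVec_mulVec_of_transpose_mul_self (by rwa [transpose_transpose])]
  have hBv : (diagonal d + Qᵀ * E * Q) *ᵥ v = μ • v := by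
    rw [← hB, transpose_mul_mul_mulVec_transpose_mulVec hQQ, hAEu, mulVec_smul]
  have hμ : d 0 + (Qᵀ * E * Q) 0 0 ≤ μ := by
    simpa [hB] using apply_self_le_of_forall_dotProduct_mulVec_le
      (forall_dotProduct_transpose_mul_mul_mulVec_le hQ hmax) 0
  obtain ⟨hv0, hw⟩ := head_pos_and_enorm_tail_le hBv hv1 hu0 hgpos
    (fun i => hlam ▸ hg ▸ le_sub_inf'_abs_sub hsimple i)
    ((frobNorm_transpose_mul_mul hQ E).trans_le hEF) hμ
  subst he
  refine ⟨(v 0)⁻¹ • Fin.tail v, ?_, ?_⟩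
  · rw [EuclideanNorm.enorm_smul, abs_inv, abs_of_pos hv0, inv_mul_le_iff₀ hv0, mul_comm]
    exact hw
  rintro q1 rfl Q2 rfl qhat1 rfl
  rw [EuclideanNorm.ip_eq_dotProduct, inv_sqrt_smul_col_add_mulVec_eq_mulVec Q hv1 hv0, hv,
    mulVec_mulVec, hQQ, one_mulVec]
  refine ⟨EuclideanNorm.enorm_eq_one_iff.mpr hu, ⟨μ, hAEu, fun ν x hx hAEx =>
    le_of_mulVec_eq_smul_of_forall_dotProduct_mulVec_le hmax hx hAEx⟩, ?_⟩
  have hv0le : v 0 ≤ 1 := by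
    nlinarith [dotProduct_self_eq_head_sq_add v, EuclideanNorm.dotProduct_self_nonneg (Fin.tail v)]
  exact (specNorm_outer_col_sub_outer_le hQ hu).trans (hw.trans (mul_le_of_le_one_right
    (mul_nonneg (div_nonneg zero_le_four hgpos.le) (EuclideanNorm.enorm_nonneg _)) hv0le))
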